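/- arXiv:1612.01219 — 3 statements merged into one kernel-verified Lean document; each statement's English description precedes it below -/
import Mathlib

section
/- Let λ > 0 and C ≥ 0 be constants, and let h_0, h_1, h_2, ... : [0,∞) → [0,∞) be differentiable functions satisfying h_0'(t) ≤ -λ h_0(t) and, for each l ≥ 1, h_l'(t) ≤ -λ h_l(t) + C · l · h_{l-1}(t). Then for every l ≥ 0 and t ≥ 0, h_l(t) ≤ e^{-λ t} · Σ_{k=0}^{l} (l! / ((l-k)! k!)) · (C t)^k · h_{l-k}(0). -/
/-!
Set `G_l(t) = ∑_k choose l k (C t)^k h_{l-k}(0)`. These functions solve the hierarchy with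
equality, `G_l' = C l G_{l-1}` and `G_l(0) = h_l(0)`, since `k · choose l k = l · choose (l-1) (k-1)`.
By induction on `l`, `e^{λ t} h_l(t)` has derivative at most `C l e^{λ t} h_{l-1}(t) ≤ C l G_{l-1}(t)`,
so it stays below `G_l` by comparison of derivatives.
-/

open Finset Real

noncomputable def binomialMajorant (a : ℕ → ℝ) (c : ℝ) (l : ℕ) (t : ℝ) : ℝ :=
  ∑ k ∈ range (l + 1), (l.choose k : ℝ) * (c * t) ^ k * a (l - k)

namespace binomialMajorant

variable (a : ℕ → ℝ) (c : ℝ)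

@[simp]
theorem apply_zero_right (l : ℕ) : binomialMajorant a c l 0 = a l := by
  rw [binomialMajorant, sum_eq_single 0 (fun k _ hk => by simp [zero_pow hk]) (by simp)]
  simp

theorem hasDerivAt (l : ℕ) (t : ℝ) :
    HasDerivAt (binomialMajorant a c l) (c * l * binomialMajorant a c (l - 1) t) t := by
  cases l with
  | zero =>
    have hconst : binomialMajorant a c 0 = fun _ => a 0 := by
      funext s
      simp [binomialMajorant]
    simpa [hconst] using hasDerivAt_const t (a 0)
  | succ n =>
    have hterm : ∀ k ∈ range (n + 2), HasDerivAt
        (fun s => ((n + 1).choose k : ℝ) * (c * s) ^ k * a (n + 1 - k))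
        (((n + 1).choose k : ℝ) * (k * (c * t) ^ (k - 1) * c) * a (n + 1 - k)) t := fun k _ =>
      ((((hasDerivAt_id t).const_mul c).pow k).const_mul _).mul_const _ |>.congr_deriv (by simp)
    refine (HasDerivAt.fun_sum hterm).congr_deriv ?_
    rw [sum_range_succ']
    simp only [Nat.cast_zero, zero_mul, mul_zero, add_zero, binomialMajorant,
      Nat.add_sub_cancel, mul_sum]
    refine sum_congr rfl fun k _ => ?_
    have hchoose : ((n + 1).choose (k + 1) : ℝ) * (k + 1) = (n + 1) * n.choose k := by
      exact_mod_cast (Nat.add_one_mul_choose_eq n k).symm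
    rw [Nat.add_sub_add_right]
    push_cast
    linear_combination ((c * t) ^ k * c * a (n - k)) * hchoose

end binomialMajorant

theorem exp_mul_le_of_hasDerivAt {lam : ℝ} {u u' B B' : ℝ → ℝ}
    (hu : ∀ s, 0 ≤ s → HasDerivAt u (u' s) s) (hB : ∀ s, 0 ≤ s → HasDerivAt B (B' s) s)
    (hle : ∀ s, 0 ≤ s → exp (lam * s) * (u' s + lam * u s) ≤ B' s) (h0 : u 0 ≤ B 0)
    {t : ℝ} (ht : 0 ≤ t) : exp (lam * t) * u t ≤ B t := by
  have hexp_u : ∀ s, 0 ≤ s →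
      HasDerivAt (fun s => exp (lam * s) * u s) (exp (lam * s) * (u' s + lam * u s)) s := by
    intro s hs
    exact ((((hasDerivAt_id s).const_mul lam).exp).mul (hu s hs)).congr_deriv
      (by simp only [id]; ring)
  refine image_le_of_deriv_right_le_deriv_boundary
    (fun s hs => (hexp_u s hs.1).continuousAt.continuousWithinAt)
    (fun s hs => (hexp_u s hs.1).hasDerivWithinAt) (by simpa using h0)
    (fun s hs => (hB s hs.1).continuousAt.continuousWithinAt)
    (fun s hs => (hB s hs.1).hasDerivWithinAt) (fun s hs => hle s hs.1) ⟨ht, le_rfl⟩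

theorem exp_mul_le_binomialMajorant {lam C : ℝ} (hC : 0 ≤ C) {h h' : ℕ → ℝ → ℝ}
    (hderiv : ∀ l t, 0 ≤ t → HasDerivAt (h l) (h' l t) t)
    (hrec : ∀ l t, 0 ≤ t → h' l t + lam * h l t ≤ C * l * h (l - 1) t) (l : ℕ) {t : ℝ}
    (ht : 0 ≤ t) : exp (lam * t) * h l t ≤ binomialMajorant (h · 0) C l t := by
  suffices step : ∀ l, (∀ s, 0 ≤ s →
      C * l * (exp (lam * s) * h (l - 1) s) ≤ C * l * binomialMajorant (h · 0) C (l - 1) s) →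
      ∀ t, 0 ≤ t → exp (lam * t) * h l t ≤ binomialMajorant (h · 0) C l t by
    induction l generalizing t with
    | zero => exact step 0 (by simp) t ht
    | succ l ih =>
      exact step (l + 1) (fun s hs => mul_le_mul_of_nonneg_left (ih hs) (by positivity)) t ht
  intro l hprev t ht
  refine exp_mul_le_of_hasDerivAt (hderiv l) (fun s _ => binomialMajorant.hasDerivAt _ C l s)
    (fun s hs => ?_) (by simp) ht
  calc exp (lam * s) * (h' l s + lam * h l s)
      ≤ exp (lam * s) * (C * l * h (l - 1) s) :=
        mul_le_mul_of_nonneg_left (hrec l s hs) (exp_pos _).le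
    _ = C * l * (exp (lam * s) * h (l - 1) s) := by ring
    _ ≤ _ := hprev s hs

theorem stmt_0_general (lam C : ℝ) (hC : 0 ≤ C)
    (h h' : ℕ → ℝ → ℝ)
    (hderiv : ∀ l t, 0 ≤ t → HasDerivAt (h l) (h' l t) t)
    (h0 : ∀ t, 0 ≤ t → h' 0 t ≤ -lam * h 0 t)
    (hrec : ∀ l t, 1 ≤ l → 0 ≤ t → h' l t ≤ -lam * h l t + C * l * h (l - 1) t) :
    ∀ l : ℕ, ∀ t : ℝ, 0 ≤ t →
      h l t ≤ Real.exp (-lam * t) *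
        ∑ k ∈ Finset.range (l + 1), (l.choose k : ℝ) * (C * t) ^ k * h (l - k) 0 := by
  have hrec_all : ∀ l t, 0 ≤ t → h' l t + lam * h l t ≤ C * l * h (l - 1) t := by
    intro l t ht
    rcases Nat.eq_zero_or_pos l with rfl | hl
    · linarith [h0 t ht, show C * ((0 : ℕ) : ℝ) * h (0 - 1) t = 0 by simp]
    · linarith [hrec l t hl ht]
  intro l t ht
  calc h l t = exp (-lam * t) * (exp (lam * t) * h l t) := by
        rw [← mul_assoc, ← exp_add, neg_mul, neg_add_cancel, exp_zero, one_mul]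
    _ ≤ exp (-lam * t) * binomialMajorant (h · 0) C l t :=
        mul_le_mul_of_nonneg_left (exp_mul_le_binomialMajorant hC hderiv hrec_all l ht)
          (exp_pos _).le

theorem stmt_0 (lam C : ℝ) (hlam : 0 < lam) (hC : 0 ≤ C)
    (h h' : ℕ → ℝ → ℝ)
    (hpos : ∀ l t, 0 ≤ t → 0 ≤ h l t)
    (hderiv : ∀ l t, 0 ≤ t → HasDerivAt (h l) (h' l t) t)
    (h0 : ∀ t, 0 ≤ t → h' 0 t ≤ -lam * h 0 t)
    (hrec : ∀ l t, 1 ≤ l → 0 ≤ t → h' l t ≤ -lam * h l t + C * l * h (l - 1) t) :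
    ∀ l : ℕ, ∀ t : ℝ, 0 ≤ t →
      h l t ≤ Real.exp (-lam * t) *
        ∑ k ∈ Finset.range (l + 1), (l.choose k : ℝ) * (C * t) ^ k * h (l - k) 0 :=
  stmt_0_general lam C hC h h' hderiv h0 hrec
end

section
/- Let λ > 0, C ≥ 0, H ≥ 0 be constants and let h_0, h_1, ... : [0,∞) → [0,∞) be differentiable with h_0' ≤ -λ h_0, h_l' ≤ -λ h_l + C l h_{l-1} for l ≥ 1, and h_l(0) ≤ H^l for all l ≥ 0. Then h_l(t) ≤ e^{-λ t} (H + C t)^l for all l ≥ 0, t ≥ 0. -/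
/-!
Multiplying by `exp (lam * t)` turns the differential inequality for `h l` into
`d/dt (exp (lam * t) * h l t) ≤ C * l * exp (lam * t) * h (l - 1) t`. By induction on `l`
the right-hand side is at most `C * l * (H + C * t) ^ (l - 1)`, the derivative of
`(H + C * t) ^ l`, so `exp (lam * t) * h l t - (H + C * t) ^ l` is antitone on `[0, ∞)`
and nonpositive at `0`.
-/

open Real

theorem le_exp_neg_mul_of_hasDerivAt {f f' F F' : ℝ → ℝ} {lam : ℝ}
    (hf : ∀ t, 0 ≤ t → HasDerivAt f (f' t) t) (hF : ∀ t, 0 ≤ t → HasDerivAt F (F' t) t)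
    (hineq : ∀ t, 0 < t → f' t ≤ -lam * f t + exp (-lam * t) * F' t) (hinit : f 0 ≤ F 0) :
    ∀ t, 0 ≤ t → f t ≤ exp (-lam * t) * F t := by
  set g : ℝ → ℝ := fun s => exp (lam * s) * f s - F s
  have hg : ∀ s, 0 ≤ s →
      HasDerivAt g (lam * exp (lam * s) * f s + exp (lam * s) * f' s - F' s) s := by
    intro s hs
    have hexp : HasDerivAt (fun s => exp (lam * s)) (lam * exp (lam * s)) s := by
      simpa [mul_comm] using ((hasDerivAt_id s).const_mul lam).exp
    exact (hexp.mul (hf s hs)).sub (hF s hs)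
  have hanti : AntitoneOn g (Set.Ici 0) := by
    refine antitoneOn_of_hasDerivWithinAt_nonpos (convex_Ici 0)
      (fun s hs => (hg s hs).continuousAt.continuousWithinAt)
      (fun s hs => (hg s (le_of_lt (by simpa using hs))).hasDerivWithinAt) ?_
    intro s hs
    rw [interior_Ici] at hs
    have hcancel : exp (lam * s) * exp (-lam * s) = 1 := by
      rw [← exp_add]; ring_nf; exact exp_zero
    have := mul_le_mul_of_nonneg_left (hineq s hs) (exp_pos (lam * s)).le
    linear_combination this + F' s * hcancel
  intro t ht
  have hgt : exp (lam * t) * f t ≤ F t := by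
    have : g t ≤ g 0 := hanti Set.self_mem_Ici ht ht
    simp only [g, mul_zero, exp_zero, one_mul] at this
    linarith
  calc f t = exp (-lam * t) * (exp (lam * t) * f t) := by
        rw [← mul_assoc, ← exp_add]; ring_nf; rw [exp_zero, one_mul]
    _ ≤ exp (-lam * t) * F t := by gcongr

theorem hasDerivAt_add_mul_pow (H C t : ℝ) (n : ℕ) :
    HasDerivAt (fun s => (H + C * s) ^ (n + 1)) ((n + 1) * (H + C * t) ^ n * C) t := by
  simpa using (((hasDerivAt_id t).const_mul C).const_add H).fun_pow (n + 1)

theorem stmt_1_general (lam C H : ℝ) (hC : 0 ≤ C)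
    (h h' : ℕ → ℝ → ℝ)
    (hderiv : ∀ l t, 0 ≤ t → HasDerivAt (h l) (h' l t) t)
    (h0 : ∀ t, 0 ≤ t → h' 0 t ≤ -lam * h 0 t)
    (hrec : ∀ l t, 1 ≤ l → 0 ≤ t → h' l t ≤ -lam * h l t + C * l * h (l - 1) t)
    (hinit : ∀ l : ℕ, h l 0 ≤ H ^ l) :
    ∀ l : ℕ, ∀ t : ℝ, 0 ≤ t →
      h l t ≤ Real.exp (-lam * t) * (H + C * t) ^ l := by
  intro l
  induction l with
  | zero =>
    simpa using le_exp_neg_mul_of_hasDerivAt (F' := fun _ => 0) (hderiv 0)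
      (fun t _ => hasDerivAt_const t 1) (fun t ht => by simpa using h0 t ht.le)
      (by simpa using hinit 0)
  | succ n ih =>
    refine le_exp_neg_mul_of_hasDerivAt (hderiv _)
      (fun t _ => hasDerivAt_add_mul_pow H C t n) (fun t ht => ?_) (by simpa using hinit _)
    calc h' (n + 1) t ≤ -lam * h (n + 1) t + C * (n + 1) * h n t := by
          simpa using hrec (n + 1) t (by omega) ht.le
      _ ≤ -lam * h (n + 1) t + C * (n + 1) * (exp (-lam * t) * (H + C * t) ^ n) := by
          gcongr
          exact ih t ht.le
      _ = _ := by ring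

theorem stmt_1 (lam C H : ℝ) (hlam : 0 < lam) (hC : 0 ≤ C) (hH : 0 ≤ H)
    (h h' : ℕ → ℝ → ℝ)
    (hpos : ∀ l t, 0 ≤ t → 0 ≤ h l t)
    (hderiv : ∀ l t, 0 ≤ t → HasDerivAt (h l) (h' l t) t)
    (h0 : ∀ t, 0 ≤ t → h' 0 t ≤ -lam * h 0 t)
    (hrec : ∀ l t, 1 ≤ l → 0 ≤ t → h' l t ≤ -lam * h l t + C * l * h (l - 1) t)
    (hinit : ∀ l : ℕ, h l 0 ≤ H ^ l) :
    ∀ l : ℕ, ∀ t : ℝ, 0 ≤ t →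
      h l t ≤ Real.exp (-lam * t) * (H + C * t) ^ l :=
  stmt_1_general lam C H hC h h' hderiv h0 hrec hinit
end

section
/- Let C ≥ 0 and let η_0, η_1, ... : [0,∞) → [0,∞) be differentiable functions satisfying η_0'(t) ≤ 0 and, for l ≥ 1, η_l'(t) ≤ C · Σ_{k=0}^{l-1} η_k(t). Suppose η_l(0) ≤ H^l / l! for all l ≥ 0 and some H ≥ 0. Then for all l ≥ 1 and t ≥ 0, η_l(t) ≤ H^l/l! + (1+H)^{l+1} · Σ_{k=1}^{l} (C t)^k / (k! (k-1)!) · (l-1)!/(l-k)!. -/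
/-!
Write `S_l(x) = ∑_{k=1}^{l} C(l-1, k-1) x^k / k!`, which is the paper's sum, and
`B_l(t) = H^l / l! + (1 + H)^(l+1) S_l(C t)`. Pascal's rule gives `S_l' = 1 + ∑_{j<l} S_j`
for `l ≥ 1`, and `∑_{j<l} H^j / j! ≤ (1 + H)^l` by the binomial theorem, so
`B_l' ≥ C ∑_{k<l} B_k` while `B_l(0) = H^l / l!`. Hence `(B_l)` is a supersolution of the
system satisfied by `(η_l)`, and `η_l ≤ B_l` follows by strong induction on `l` from the
comparison principle for differential inequalities.
-/

open Finset Nat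

lemma le_of_hasDerivAt_le_of_nonneg {f f' g g' : ℝ → ℝ}
    (hf : ∀ t, 0 ≤ t → HasDerivAt f (f' t) t) (hg : ∀ t, 0 ≤ t → HasDerivAt g (g' t) t)
    (hfg' : ∀ t, 0 ≤ t → f' t ≤ g' t) (hfg : f 0 ≤ g 0) {t : ℝ} (ht : 0 ≤ t) :
    f t ≤ g t := by
  have hcont : ∀ {u u' : ℝ → ℝ}, (∀ t, 0 ≤ t → HasDerivAt u (u' t) t) →
      ContinuousOn u (Set.Icc 0 t) :=
    fun hu => fun s hs => (hu s hs.1).continuousAt.continuousWithinAt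
  exact image_le_of_deriv_right_le_deriv_boundary (hcont hf)
    (fun s hs => (hf s hs.1).hasDerivWithinAt) hfg (hcont hg)
    (fun s hs => (hg s hs.1).hasDerivWithinAt) (fun s hs => hfg' s hs.1) ⟨ht, le_rfl⟩

lemma sum_range_pow_div_factorial_le {H : ℝ} (hH : 0 ≤ H) (l : ℕ) :
    ∑ j ∈ range l, H ^ j / j ! ≤ (1 + H) ^ l := by
  calc ∑ j ∈ range l, H ^ j / j !
      ≤ ∑ j ∈ range l, H ^ j * l.choose j := by
        gcongr with j hj
        have hchoose : (1 : ℝ) ≤ l.choose j := mod_cast Nat.choose_pos (mem_range.1 hj).le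
        have hfact : (1 : ℝ) ≤ j ! := mod_cast j.factorial_pos
        exact (div_le_self (by positivity) hfact).trans
          (le_mul_of_one_le_right (by positivity) hchoose)
    _ ≤ ∑ j ∈ range (l + 1), H ^ j * l.choose j := by
        rw [sum_range_succ]
        exact le_add_of_nonneg_right (by positivity)
    _ = (1 + H) ^ l := by
        rw [add_comm 1 H, add_pow]
        simp

noncomputable def boundSum (l : ℕ) (x : ℝ) : ℝ :=
  ∑ k ∈ range l, ((l - 1).choose k : ℝ) * x ^ (k + 1) / (k + 1)!

noncomputable def boundSumDeriv (l : ℕ) (x : ℝ) : ℝ :=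
  ∑ k ∈ range l, ((l - 1).choose k : ℝ) * x ^ k / k !

lemma hasDerivAt_boundSum (l : ℕ) (x : ℝ) :
    HasDerivAt (boundSum l) (boundSumDeriv l x) x := by
  unfold boundSum boundSumDeriv
  refine HasDerivAt.fun_sum fun k _ => ?_
  refine (((hasDerivAt_pow (k + 1) x).const_mul ((l - 1).choose k : ℝ)).div_const
    ((k + 1)! : ℝ)).congr_deriv ?_
  rw [Nat.factorial_succ]
  push_cast
  field_simp

lemma boundSum_nonneg (l : ℕ) {x : ℝ} (hx : 0 ≤ x) : 0 ≤ boundSum l x := by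
  unfold boundSum
  positivity

lemma boundSumDeriv_succ_succ (m : ℕ) (x : ℝ) :
    boundSumDeriv (m + 1 + 1) x = boundSumDeriv (m + 1) x + boundSum (m + 1) x := by
  simp only [boundSumDeriv, boundSum, add_tsub_cancel_right]
  rw [sum_range_succ' _ (m + 1)]
  simp only [Nat.choose_succ_succ', Nat.cast_add, add_mul, add_div, sum_add_distrib]
  rw [sum_range_succ' (fun k => (m.choose k : ℝ) * x ^ k / k !),
    sum_range_succ (fun k => (m.choose (k + 1) : ℝ) * x ^ (k + 1) / (k + 1)!)]
  simp only [Nat.choose_succ_self, Nat.choose_zero_right, Nat.cast_zero, Nat.cast_one, zero_mul,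
    zero_div, add_zero, pow_zero, Nat.factorial_zero, div_one, mul_one]
  ring

lemma boundSumDeriv_succ (m : ℕ) (x : ℝ) :
    boundSumDeriv (m + 1) x = 1 + ∑ j ∈ range (m + 1), boundSum j x := by
  induction m with
  | zero => simp [boundSumDeriv, boundSum]
  | succ m ih => rw [boundSumDeriv_succ_succ, ih, sum_range_succ _ (m + 1), add_assoc]

lemma boundSum_eq_sum_Icc (l : ℕ) (x : ℝ) :
    boundSum l x = ∑ k ∈ Icc 1 l,
      x ^ k / ((k ! : ℝ) * ((k - 1)! : ℝ)) * (((l - 1)! : ℝ) / ((l - k)! : ℝ)) := by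
  rw [← Ico_add_one_right_eq_Icc, sum_Ico_eq_sum_range, add_tsub_cancel_right, boundSum]
  refine sum_congr rfl fun k hk => ?_
  have hkl : k ≤ l - 1 := Nat.le_sub_one_of_lt (mem_range.1 hk)
  rw [Nat.cast_choose ℝ hkl, add_comm 1 k, add_tsub_cancel_right,
    show l - (k + 1) = l - 1 - k by omega]
  field_simp

noncomputable def etaBound (C H : ℝ) (l : ℕ) (t : ℝ) : ℝ :=
  H ^ l / l ! + (1 + H) ^ (l + 1) * boundSum l (C * t)

lemma etaBound_zero_right (C H : ℝ) (l : ℕ) : etaBound C H l 0 = H ^ l / l ! := by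
  simp [etaBound, boundSum]

lemma hasDerivAt_etaBound (C H : ℝ) (l : ℕ) (t : ℝ) :
    HasDerivAt (etaBound C H l) (C * ((1 + H) ^ (l + 1) * boundSumDeriv l (C * t))) t := by
  have := (((hasDerivAt_boundSum l (C * t)).comp t
    ((hasDerivAt_id t).const_mul C)).const_mul ((1 + H) ^ (l + 1))).const_add (H ^ l / l !)
  exact this.congr_deriv (by rw [mul_one]; ring)

lemma sum_etaBound_le {C H : ℝ} (hC : 0 ≤ C) (hH : 0 ≤ H) (l : ℕ) {t : ℝ} (ht : 0 ≤ t) :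
    ∑ k ∈ range l, etaBound C H k t ≤ (1 + H) ^ (l + 1) * boundSumDeriv l (C * t) := by
  rcases l with _ | m
  · simp [boundSumDeriv]
  have hx : 0 ≤ C * t := mul_nonneg hC ht
  have hpow : ∀ j ≤ m + 2, (1 + H) ^ j ≤ (1 + H) ^ (m + 2) :=
    fun j hj => pow_le_pow_right₀ (by linarith) hj
  calc ∑ k ∈ range (m + 1), etaBound C H k t
      = ∑ k ∈ range (m + 1), H ^ k / k !
          + ∑ k ∈ range (m + 1), (1 + H) ^ (k + 1) * boundSum k (C * t) := sum_add_distrib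
    _ ≤ (1 + H) ^ (m + 2) + ∑ k ∈ range (m + 1), (1 + H) ^ (m + 2) * boundSum k (C * t) := by
        refine add_le_add ((sum_range_pow_div_factorial_le hH _).trans (hpow _ (by omega)))
          (sum_le_sum fun k hk => ?_)
        exact mul_le_mul_of_nonneg_right (hpow _ (by have := mem_range.1 hk; omega))
          (boundSum_nonneg k hx)
    _ = (1 + H) ^ (m + 1 + 1) * boundSumDeriv (m + 1) (C * t) := by
        rw [boundSumDeriv_succ, ← mul_sum]
        ring

theorem stmt_2_general (C H : ℝ) (hC : 0 ≤ C) (hH : 0 ≤ H)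
    (η η' : ℕ → ℝ → ℝ)
    (hderiv : ∀ l t, 0 ≤ t → HasDerivAt (η l) (η' l t) t)
    (h0 : ∀ t, 0 ≤ t → η' 0 t ≤ 0)
    (hrec : ∀ l t, 1 ≤ l → 0 ≤ t → η' l t ≤ C * ∑ k ∈ Finset.range l, η k t)
    (hinit : ∀ l : ℕ, η l 0 ≤ H ^ l / (Nat.factorial l : ℝ)) :
    ∀ l : ℕ, ∀ t : ℝ, 1 ≤ l → 0 ≤ t →
      η l t ≤ H ^ l / (Nat.factorial l : ℝ) +
        (1 + H) ^ (l + 1) *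
          ∑ k ∈ Finset.Icc 1 l,
            (C * t) ^ k / ((Nat.factorial k : ℝ) * (Nat.factorial (k - 1) : ℝ)) *
              ((Nat.factorial (l - 1) : ℝ) / (Nat.factorial (l - k) : ℝ)) := by
  have hderiv_le : ∀ l t, 0 ≤ t → η' l t ≤ C * ∑ k ∈ range l, η k t := by
    rintro (_ | l) t ht
    · simpa using h0 t ht
    · exact hrec _ t l.succ_pos ht
  have hη : ∀ l t, 0 ≤ t → η l t ≤ etaBound C H l t := by
    intro l
    induction l using Nat.strong_induction_on with
    | _ l ih =>
      refine fun t => le_of_hasDerivAt_le_of_nonneg (hderiv l)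
        (fun s _ => hasDerivAt_etaBound C H l s) (fun s hs => ?_)
        ((hinit l).trans_eq (etaBound_zero_right C H l).symm)
      calc η' l s ≤ C * ∑ k ∈ range l, η k s := hderiv_le l s hs
        _ ≤ C * ∑ k ∈ range l, etaBound C H k s := by
            gcongr with k hk
            exact ih k (mem_range.1 hk) s hs
        _ ≤ _ := mul_le_mul_of_nonneg_left (sum_etaBound_le hC hH l hs) hC
  intro l t _ ht
  simpa only [etaBound, boundSum_eq_sum_Icc] using hη l t ht

theorem stmt_2 (C H : ℝ) (hC : 0 ≤ C) (hH : 0 ≤ H)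
    (η η' : ℕ → ℝ → ℝ)
    (hpos : ∀ l t, 0 ≤ t → 0 ≤ η l t)
    (hderiv : ∀ l t, 0 ≤ t → HasDerivAt (η l) (η' l t) t)
    (h0 : ∀ t, 0 ≤ t → η' 0 t ≤ 0)
    (hrec : ∀ l t, 1 ≤ l → 0 ≤ t → η' l t ≤ C * ∑ k ∈ Finset.range l, η k t)
    (hinit : ∀ l : ℕ, η l 0 ≤ H ^ l / (Nat.factorial l : ℝ)) :
    ∀ l : ℕ, ∀ t : ℝ, 1 ≤ l → 0 ≤ t →
      η l t ≤ H ^ l / (Nat.factorial l : ℝ) +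
        (1 + H) ^ (l + 1) *
          ∑ k ∈ Finset.Icc 1 l,
            (C * t) ^ k / ((Nat.factorial k : ℝ) * (Nat.factorial (k - 1) : ℝ)) *
              ((Nat.factorial (l - 1) : ℝ) / (Nat.factorial (l - k) : ℝ)) :=
  stmt_2_general C H hC hH η η' hderiv h0 hrec hinit
end
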